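/- arXiv:1809.05871 — 2 statements merged into one kernel-verified Lean document; each statement's English description precedes it below -/
import Mathlib

section
/- On the dihedral quandle Q = ℤ/4ℤ with operation i ∗ j = 2j − i (mod 4), the function φ₀ : Q × Q → Multiplicative ℤ defined by φ₀(0, 1) = φ₀(0, 3) = t (where t denotes the generator Multiplicative.ofAdd 1) and φ₀(a, b) = 1 for all other pairs (a, b), is a 2-cocycle: φ₀(a, a) = 1 for all a, and φ₀(a, b) · φ₀(a ∗ b, c) = φ₀(a, c) · φ₀(a ∗ c, b ∗ c) for all a, b, c ∈ Q. -/
/-- The dihedral quandle operation on `ZMod 4`: `i ∗ j = 2j - i`. -/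
def dihedralOp (i j : ZMod 4) : ZMod 4 := 2 * j - i

/-- The 2-cocycle `φ₀` on the dihedral quandle `ZMod 4`, with values in
`Multiplicative ℤ`: `φ₀ 0 1 = φ₀ 0 3 = t` (the generator) and `φ₀ = 1`
otherwise. -/
def phi₀ (a b : ZMod 4) : Multiplicative ℤ :=
  if (a = 0 ∧ b = 1) ∨ (a = 0 ∧ b = 3) then Multiplicative.ofAdd (1 : ℤ) else 1

/-- `φ₀` is a 2-cocycle on the dihedral quandle `ZMod 4`. -/
theorem phi₀_isTwoCocycle :
    (∀ a : ZMod 4, phi₀ a a = 1) ∧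
      ∀ a b c : ZMod 4,
        phi₀ a b * phi₀ (dihedralOp a b) c =
          phi₀ a c * phi₀ (dihedralOp a c) (dihedralOp b c) := by
  decide
end

section
/- On the dihedral quandle Q = ℤ/4ℤ with operation i ∗ j = 2j − i (mod 4), the 2-cocycle φ₀ (defined by φ₀(0, 1) = φ₀(0, 3) = t and φ₀(a, b) = 1 otherwise, with values in Multiplicative ℤ) is non-trivial: there is no function ψ : Q → Multiplicative ℤ such that φ₀(x, y) = ψ(x) · ψ(x ∗ y)⁻¹ for all x, y ∈ Q. -/
/-- `φ₀` is not a coboundary. -/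
theorem phi₀_not_coboundary :
    ¬ ∃ ψ : ZMod 4 → Multiplicative ℤ,
        ∀ x y : ZMod 4, phi₀ x y = ψ x * (ψ (dihedralOp x y))⁻¹ := by
  rintro ⟨ψ, h⟩
  have h1 := h 0 1
  have h2 := h 2 1
  have e1 : dihedralOp 0 1 = 2 := by decide
  have e2 : dihedralOp 2 1 = 0 := by decide
  rw [e1] at h1
  rw [e2] at h2
  have p1 : phi₀ 0 1 = Multiplicative.ofAdd (1 : ℤ) := by decide
  have p2 : phi₀ 2 1 = 1 := by decide
  rw [p1] at h1
  rw [p2] at h2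
  have key : ψ 0 * (ψ 2)⁻¹ * (ψ 2 * (ψ 0)⁻¹) = Multiplicative.ofAdd (1:ℤ) := by
    rw [← h1, ← h2, mul_one]
  have key2 : Multiplicative.ofAdd (1:ℤ) = 1 := by rw [← key]; group
  simp at key2
end
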